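/- arXiv:2310.11060 — 5 statements merged into one kernel-verified Lean document; each statement's English description precedes it below -/
import Mathlib

section
/- The extended Square wave mechanism satisfies ε-local differential privacy: for any two inputs x₁, x₂ ∈ [-1,1] and any output c ∈ [-b-1, 1+b], the ratio of output densities Pr[A(x₁)=c]/Pr[A(x₂)=c] is at most e^ε, where the density is p = e^ε/(2be^ε+2) if c ∈ [x-b, x+b] and q = 1/(2be^ε+2) otherwise. -/
open Real

/-- The boundary parameter of the extended Square wave mechanism. -/
noncomputable def swB (ε : ℝ) : ℝ :=
  (ε * Real.exp ε - Real.exp ε + 1) / (Real.exp ε * (Real.exp ε - ε - 1))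

/-- Output density of the extended Square wave mechanism with budget `ε`,
boundary parameter `b`, input `x`, at output `c`. -/
noncomputable def swDensity (ε b x c : ℝ) : ℝ :=
  if x - b ≤ c ∧ c ≤ x + b then Real.exp ε / (2 * b * Real.exp ε + 2)
  else 1 / (2 * b * Real.exp ε + 2)

lemma swB_pos (ε : ℝ) (hε : 0 < ε) : 0 < swB ε := by
  have h1 : ε + 1 < Real.exp ε := by
    have := Real.add_one_lt_exp (ne_of_gt hε)
    linarith
  have h2 : 1 - ε < Real.exp (-ε) := by
    have := Real.add_one_lt_exp (x := -ε) (by linarith)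
    linarith
  have hexp : 0 < Real.exp ε := Real.exp_pos ε
  have hnum : 0 < ε * Real.exp ε - Real.exp ε + 1 := by
    have : (1 - ε) * Real.exp ε < Real.exp (-ε) * Real.exp ε := by
      nlinarith
    rw [← Real.exp_add] at this
    simp at this
    nlinarith
  have hden : 0 < Real.exp ε * (Real.exp ε - ε - 1) := by
    apply mul_pos hexp; linarith
  exact div_pos hnum hden

/-- The extended Square wave mechanism satisfies `ε`-local differential privacy. -/
theorem squareWave_LDP (ε : ℝ) (hε : 0 < ε) (b : ℝ) (hb : b = swB ε)
    (x₁ x₂ : ℝ) (hx₁ : x₁ ∈ Set.Icc (-1 : ℝ) 1) (hx₂ : x₂ ∈ Set.Icc (-1 : ℝ) 1)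
    (c : ℝ) (hc : c ∈ Set.Icc (-b - 1) (1 + b)) :
    swDensity ε b x₁ c ≤ Real.exp ε * swDensity ε b x₂ c := by
  have hbpos : 0 < b := hb ▸ swB_pos ε hε
  have hexp : 0 < Real.exp ε := Real.exp_pos ε
  have hexp1 : 1 ≤ Real.exp ε := Real.one_le_exp (le_of_lt hε)
  have hden : 0 < 2 * b * Real.exp ε + 2 := by nlinarith
  unfold swDensity
  split <;> split <;> rw [← mul_div_assoc, div_le_div_iff₀ hden hden] <;>
    nlinarith [mul_nonneg (mul_nonneg (sub_nonneg.mpr hexp1) hexp.le) hden.le,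
      mul_nonneg (sub_nonneg.mpr hexp1) hden.le]
end

section
/- For the Square wave mechanism with input x ∈ [-1,1], the expectation of the output equals (b(e^ε - 1)/(be^ε + 1)) · x. Equivalently, (1/(2be^ε+2)) · (∫_{-1-b}^{x-b} t dt + e^ε ∫_{x-b}^{x+b} t dt + ∫_{x+b}^{1+b} t dt) = (b(e^ε - 1)/(be^ε + 1)) · x. -/
open Real

/-- Expectation of the Square wave mechanism output:
`E[x̃] = (b(e^ε - 1)/(be^ε + 1)) · x`. -/
theorem squareWave_expectation (ε b x : ℝ) (hε : 0 < ε) (hb : 0 < b)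
    (hx : x ∈ Set.Icc (-1 : ℝ) 1) :
    (1 / (2 * b * Real.exp ε + 2)) *
      ((∫ t in (-1 - b)..(x - b), t) + Real.exp ε * (∫ t in (x - b)..(x + b), t) +
        ∫ t in (x + b)..(1 + b), t)
      = (b * (Real.exp ε - 1) / (b * Real.exp ε + 1)) * x := by
  have hE : (0:ℝ) < Real.exp ε := Real.exp_pos ε
  have h1 : (0:ℝ) < 2 * b * Real.exp ε + 2 := by positivity
  have h2 : (0:ℝ) < b * Real.exp ε + 1 := by positivity
  simp only [integral_id]
  field_simp
  ring
end

section
/- For the Square wave mechanism with input x ∈ [-1,1], the second moment of the output equals (b³e^ε + 3b² + 3b + 1)/(3(be^ε + 1)) + (b(e^ε - 1)/(be^ε + 1)) · x². Equivalently, (1/(2be^ε+2)) · (∫_{-1-b}^{x-b} t² dt + e^ε ∫_{x-b}^{x+b} t² dt + ∫_{x+b}^{1+b} t² dt) equals this expression. -/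
open Real

/-- Second moment of the Square wave mechanism output:
`E[x̃²] = (b³e^ε + 3b² + 3b + 1)/(3(be^ε + 1)) + (b(e^ε - 1)/(be^ε + 1)) · x²`. -/
theorem squareWave_second_moment (ε b x : ℝ) (hε : 0 < ε) (hb : 0 < b)
    (hx : x ∈ Set.Icc (-1 : ℝ) 1) :
    (1 / (2 * b * Real.exp ε + 2)) *
      ((∫ t in (-1 - b)..(x - b), t ^ 2) + Real.exp ε * (∫ t in (x - b)..(x + b), t ^ 2) +
        ∫ t in (x + b)..(1 + b), t ^ 2)
      = (b ^ 3 * Real.exp ε + 3 * b ^ 2 + 3 * b + 1) / (3 * (b * Real.exp ε + 1)) +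
        (b * (Real.exp ε - 1) / (b * Real.exp ε + 1)) * x ^ 2 := by
  have hE : 0 < Real.exp ε := Real.exp_pos ε
  have h1 : b * Real.exp ε + 1 ≠ 0 := by positivity
  have h2 : 2 * b * Real.exp ε + 2 ≠ 0 := by positivity
  simp only [integral_pow]
  field_simp
  ring
end

section
/- Worst-case error bound for the HDS mechanism under propagation: let x̃_{u,j} be HDS-perturbed features with values in [-b-1, b+1], E[x̃_{u,j}] = C·x_{u,j}, and Var[x̃_{u,j}] ≤ σ². Let z̃_{v,j} = ∑_u Π(v,u) x̃_{u,j} with Π(v,u) ≥ 0, ∑_u Π(v,u) = 1, and z_{v,j} = ∑_u Π(v,u) x_{u,j} ∈ [-1,1]. Then for any δ ∈ (0,1), with probability at least 1-δ: max_{j∈{1,...,d}} |z̃_{v,j} - z_{v,j}| ≤ τ + (1-C), where τ satisfies 2d·exp(-τ²/(2σ²‖Π_v‖₂² + (4/3)τ(b+1))) ≤ δ. -/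
/-!
For each coordinate `j` the centred summands `w u * (xt u j - C * x u j)` are independent, have
mean zero, are bounded by `2(b+1)` and have total variance at most `σ² ∑ u, w u ^ 2`, so
Bernstein's inequality bounds the probability that their sum exceeds `τ` in absolute value by
`2 exp(-τ² / (2σ² ∑ w² + (4/3)τ(b+1)))`; a union bound over the `d` coordinates gives the
failure probability `δ`. Off that event the bias `|C z - z| = (1 - C)|z| ≤ 1 - C` accounts for
the second term. Bernstein's inequality is the Chernoff bound combined with
`E[exp(tY)] ≤ exp(Var[Y] t² / (2(1 - tM/3)))` for `|Y| ≤ M`, which follows from comparing the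
Taylor tail of `exp` with a geometric series.
-/

open Real MeasureTheory ProbabilityTheory
open scoped Nat

lemma Nat.two_mul_three_pow_le_factorial_add_two (n : ℕ) : 2 * 3 ^ n ≤ (n + 2)! := by
  induction n with
  | zero => simp
  | succ k ih =>
    rw [show k + 1 + 2 = (k + 2) + 1 by ring, Nat.factorial_succ, pow_succ]
    nlinarith

lemma Real.exp_le_one_add_add_sq_div {x a : ℝ} (hx : |x| ≤ a) (ha : a < 3) :
    exp x ≤ 1 + x + x ^ 2 / (2 * (1 - a / 3)) := by
  have ha₀ : 0 ≤ a := (abs_nonneg x).trans hx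
  have hr₀ : 0 ≤ a / 3 := by positivity
  have hr₁ : a / 3 < 1 := by linarith
  have hsum := Real.summable_pow_div_factorial x
  have hterm (n : ℕ) : x ^ (n + 2) / (n + 2)! ≤ x ^ 2 / 2 * (a / 3) ^ n := by
    have hfac : (2 * 3 ^ n : ℝ) ≤ (n + 2)! := by
      exact_mod_cast Nat.two_mul_three_pow_le_factorial_add_two n
    have hpow : x ^ (n + 2) ≤ x ^ 2 * a ^ n :=
      calc x ^ (n + 2) ≤ |x| ^ (n + 2) := by rw [← abs_pow]; exact le_abs_self _
        _ = x ^ 2 * |x| ^ n := by rw [pow_add, sq_abs, mul_comm]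
        _ ≤ x ^ 2 * a ^ n := by gcongr
    calc x ^ (n + 2) / (n + 2)! ≤ x ^ 2 * a ^ n / (2 * 3 ^ n) :=
          div_le_div₀ (mul_nonneg (sq_nonneg x) (pow_nonneg ha₀ n)) hpow (by positivity) hfac
      _ = x ^ 2 / 2 * (a / 3) ^ n := by rw [div_pow]; ring
  calc exp x = 1 + x + ∑' n : ℕ, x ^ (n + 2) / (n + 2)! := by
        rw [exp_eq_exp_ℝ, NormedSpace.exp_eq_tsum_div]
        beta_reduce
        rw [← hsum.sum_add_tsum_nat_add 2]
        simp [Finset.sum_range_succ]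
    _ ≤ 1 + x + ∑' n : ℕ, x ^ 2 / 2 * (a / 3) ^ n := by
        gcongr _ + ?_
        exact Summable.tsum_le_tsum hterm ((summable_nat_add_iff 2).2 hsum)
          ((summable_geometric_of_lt_one hr₀ hr₁).mul_left _)
    _ = 1 + x + x ^ 2 / (2 * (1 - a / 3)) := by
        rw [tsum_mul_left, tsum_geometric_of_lt_one hr₀ hr₁]
        field_simp

namespace ProbabilityTheory

variable {Ω ι : Type*} [MeasurableSpace Ω] {μ : Measure Ω} [IsProbabilityMeasure μ] [Fintype ι]

lemma mgf_le_exp_variance_mul {Y : Ω → ℝ} (hY : AEMeasurable Y μ) {M t : ℝ}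
    (hbdd : ∀ ω, |Y ω| ≤ M) (hmean : μ[Y] = 0) (ht : 0 ≤ t) (htM : t * M < 3) :
    mgf Y μ t ≤ exp (Var[Y; μ] * (t ^ 2 / (2 * (1 - t * M / 3)))) := by
  set c := t ^ 2 / (2 * (1 - t * M / 3))
  have hY₂ : MemLp Y 2 μ := MemLp.of_bound hY.aestronglyMeasurable M (ae_of_all _ hbdd)
  have hY₁ : Integrable Y μ := hY₂.integrable one_le_two
  have hpoint (ω : Ω) : exp (t * Y ω) ≤ 1 + t * Y ω + c * Y ω ^ 2 := by
    have htY : |t * Y ω| ≤ t * M := by rw [abs_mul, abs_of_nonneg ht]; gcongr; exact hbdd ω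
    convert Real.exp_le_one_add_add_sq_div htY htM using 2
    ring
  calc mgf Y μ t ≤ ∫ ω, (1 + t * Y ω + c * Y ω ^ 2) ∂μ :=
        integral_mono_of_nonneg (ae_of_all _ fun _ => (exp_pos _).le)
          (((integrable_const 1).add (hY₁.const_mul t)).add (hY₂.integrable_sq.const_mul c))
          (ae_of_all _ hpoint)
    _ = 1 + Var[Y; μ] * c := by
        rw [integral_add (f := fun ω => 1 + t * Y ω) ((integrable_const 1).add (hY₁.const_mul t))
            (hY₂.integrable_sq.const_mul c), integral_add (integrable_const 1) (hY₁.const_mul t),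
          integral_const_mul, integral_const_mul, hmean, variance_of_integral_eq_zero hY hmean]
        simp [mul_comm]
    _ ≤ exp (Var[Y; μ] * c) := by linarith [add_one_le_exp (Var[Y; μ] * c)]

lemma measureReal_sum_ge_le_exp_of_mul_lt {Y : ι → Ω → ℝ}
    (hY : ∀ i, Measurable (Y i)) (hindep : iIndepFun Y μ) {M : ℝ} (hbdd : ∀ i ω, |Y i ω| ≤ M)
    (hmean : ∀ i, μ[Y i] = 0) {v : ℝ} (hvar : ∑ i, Var[Y i; μ] ≤ v) (τ : ℝ) {t : ℝ}
    (ht : 0 ≤ t) (htM : t * M < 3) :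
    μ.real {ω | τ ≤ ∑ i, Y i ω} ≤ exp (-t * τ + v * (t ^ 2 / (2 * (1 - t * M / 3)))) := by
  set c := t ^ 2 / (2 * (1 - t * M / 3))
  have hc : 0 ≤ c := div_nonneg (sq_nonneg t) (by linarith)
  have hexp_int (i : ι) : Integrable (fun ω => exp (t * Y i ω)) μ :=
    Integrable.of_bound (by fun_prop) (exp (t * M)) (ae_of_all _ fun ω => by
      rw [Real.norm_of_nonneg (exp_pos _).le, exp_le_exp]
      exact mul_le_mul_of_nonneg_left ((le_abs_self _).trans (hbdd i ω)) ht)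
  have hmgf : mgf (fun ω => ∑ i, Y i ω) μ t ≤ exp (v * c) :=
    calc mgf (fun ω => ∑ i, Y i ω) μ t = ∏ i, mgf (Y i) μ t := by
          rw [← hindep.mgf_sum hY]; congr with ω; simp
      _ ≤ ∏ i, exp (Var[Y i; μ] * c) := Finset.prod_le_prod (fun i _ => mgf_nonneg)
          fun i _ => mgf_le_exp_variance_mul (hY i).aemeasurable (hbdd i) (hmean i) ht htM
      _ = exp ((∑ i, Var[Y i; μ]) * c) := by rw [← exp_sum, Finset.sum_mul]
      _ ≤ exp (v * c) := by gcongr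
  have hsum_int : Integrable (fun ω => exp (t * (∑ i, Y i) ω)) μ :=
    hindep.integrable_exp_mul_sum hY fun i _ => hexp_int i
  calc μ.real {ω | τ ≤ ∑ i, Y i ω} ≤ exp (-t * τ) * mgf (fun ω => ∑ i, Y i ω) μ t :=
        measure_ge_le_exp_mul_mgf τ ht (by simpa only [Finset.sum_apply] using hsum_int)
    _ ≤ exp (-t * τ) * exp (v * c) := by gcongr
    _ = exp (-t * τ + v * c) := (exp_add _ _).symm

/-- The optimal `t = τ / (v + Mτ/3)` violates `tM < 3` when `v = 0`; there `t = 3 / (2M)` attains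
the same exponent. -/
lemma exists_bernstein_exponent_eq {v M τ : ℝ} (hv : 0 ≤ v) (hM : 0 < M) (hτ : 0 < τ) :
    ∃ t, 0 ≤ t ∧ t * M < 3 ∧
      -t * τ + v * (t ^ 2 / (2 * (1 - t * M / 3))) = -τ ^ 2 / (2 * v + 2 / 3 * M * τ) := by
  rcases hv.eq_or_lt with rfl | hv
  · refine ⟨3 / (2 * M), by positivity, by field_simp; norm_num, ?_⟩
    field_simp
    ring
  · have hD : 0 < 3 * v + M * τ := by positivity
    refine ⟨3 * τ / (3 * v + M * τ), by positivity, ?_, ?_⟩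
    · rw [div_mul_eq_mul_div, div_lt_iff₀ hD]
      nlinarith
    · have h1 : 1 - 3 * τ / (3 * v + M * τ) * M / 3 = 3 * v / (3 * v + M * τ) := by
        field_simp; ring
      rw [h1]
      field_simp
      ring

theorem measureReal_sum_ge_le_bernstein {Y : ι → Ω → ℝ}
    (hY : ∀ i, Measurable (Y i)) (hindep : iIndepFun Y μ) {M : ℝ} (hM : 0 < M)
    (hbdd : ∀ i ω, |Y i ω| ≤ M) (hmean : ∀ i, μ[Y i] = 0) {v : ℝ}
    (hvar : ∑ i, Var[Y i; μ] ≤ v) {τ : ℝ} (hτ : 0 < τ) :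
    μ.real {ω | τ ≤ ∑ i, Y i ω} ≤ exp (-τ ^ 2 / (2 * v + 2 / 3 * M * τ)) := by
  have hv : 0 ≤ v := (Finset.sum_nonneg fun i _ => variance_nonneg _ _).trans hvar
  obtain ⟨t, ht, htM, hexponent⟩ := exists_bernstein_exponent_eq hv hM hτ
  exact hexponent ▸ measureReal_sum_ge_le_exp_of_mul_lt hY hindep hbdd hmean hvar τ ht htM

theorem measureReal_abs_sum_gt_le_bernstein {Y : ι → Ω → ℝ}
    (hY : ∀ i, Measurable (Y i)) (hindep : iIndepFun Y μ) {M : ℝ} (hM : 0 < M)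
    (hbdd : ∀ i ω, |Y i ω| ≤ M) (hmean : ∀ i, μ[Y i] = 0) {v : ℝ}
    (hvar : ∑ i, Var[Y i; μ] ≤ v) {τ : ℝ} (hτ : 0 < τ) :
    μ.real {ω | τ < |∑ i, Y i ω|} ≤ 2 * exp (-τ ^ 2 / (2 * v + 2 / 3 * M * τ)) := by
  have hupper := measureReal_sum_ge_le_bernstein hY hindep hM hbdd hmean hvar hτ
  have hlower := measureReal_sum_ge_le_bernstein (Y := fun i ω => -Y i ω) (fun i => (hY i).neg)
    (hindep.comp _ fun _ => measurable_neg) hM (by simpa only [abs_neg] using hbdd)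
    (by simpa only [integral_neg, neg_eq_zero] using hmean)
    (by simpa only [variance_fun_neg] using hvar) hτ
  calc μ.real {ω | τ < |∑ i, Y i ω|}
      ≤ μ.real ({ω | τ ≤ ∑ i, Y i ω} ∪ {ω | τ ≤ ∑ i, -Y i ω}) := by
        refine measureReal_mono fun ω (hω : τ < |∑ i, Y i ω|) => ?_
        rcases lt_abs.1 hω with h | h
        · exact Or.inl h.le
        · exact Or.inr (by simpa only [Set.mem_ofPred_eq, Finset.sum_neg_distrib] using h.le)
    _ ≤ μ.real {ω | τ ≤ ∑ i, Y i ω} + μ.real {ω | τ ≤ ∑ i, -Y i ω} := measureReal_union_le _ _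
    _ ≤ 2 * exp (-τ ^ 2 / (2 * v + 2 / 3 * M * τ)) := by linarith

theorem measureReal_abs_weighted_sum_sub_gt_le {X : ι → Ω → ℝ}
    (hX : ∀ i, Measurable (X i)) (hindep : iIndepFun X μ) {m : ι → ℝ} (hmean : ∀ i, μ[X i] = m i)
    {M : ℝ} (hM : 0 < M) (hbdd : ∀ i ω, |X i ω - m i| ≤ M) {w : ι → ℝ} (hw : ∀ i, |w i| ≤ 1)
    {s : ℝ} (hvar : ∀ i, Var[X i; μ] ≤ s) {τ : ℝ} (hτ : 0 < τ) :
    μ.real {ω | τ < |∑ i, w i * (X i ω - m i)|} ≤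
      2 * exp (-τ ^ 2 / (2 * (s * ∑ i, w i ^ 2) + 2 / 3 * M * τ)) := by
  have hX_int (i : ι) : Integrable (X i) μ :=
    Integrable.of_bound (hX i).aestronglyMeasurable (M + |m i|) (ae_of_all _ fun ω => by
      rw [Real.norm_eq_abs]
      linarith [abs_sub_abs_le_abs_sub (X i ω) (m i), hbdd i ω])
  refine measureReal_abs_sum_gt_le_bernstein (fun i => ((hX i).sub_const _).const_mul _)
    (hindep.comp _ fun i => (measurable_id.sub_const _).const_mul (w i)) hM
    (fun i ω => ?_) (fun i => ?_) ?_ hτ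
  · rw [abs_mul]
    exact (mul_le_mul_of_nonneg_left (hbdd i ω) (abs_nonneg _)).trans
      (mul_le_of_le_one_left hM.le (hw i))
  · rw [integral_const_mul, integral_sub (hX_int i) (integrable_const _), hmean, integral_const]
    simp
  · calc ∑ i, Var[fun ω => w i * (X i ω - m i); μ] = ∑ i, w i ^ 2 * Var[X i; μ] := by
          simp only [variance_const_mul, variance_sub_const (hX _).aestronglyMeasurable]
      _ ≤ ∑ i, w i ^ 2 * s := by gcongr; exact hvar _
      _ = s * ∑ i, w i ^ 2 := by rw [Finset.mul_sum]; simp only [mul_comm]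

lemma ofReal_one_sub_le_measure_of_measureReal_compl_le {s : Set Ω} {δ : ℝ}
    (h : μ.real sᶜ ≤ δ) : ENNReal.ofReal (1 - δ) ≤ μ s := by
  rw [← ofReal_measureReal]
  refine ENNReal.ofReal_le_ofReal ?_
  have := measureReal_union_le (μ := μ) s sᶜ
  rw [Set.union_compl_self, probReal_univ] at this
  linarith

end ProbabilityTheory

lemma abs_weighted_sum_sub_le {ι : Type*} (s : Finset ι) (w a z : ι → ℝ) {C : ℝ}
    (hC : C ∈ Set.Icc (0 : ℝ) 1) (hz : |∑ i ∈ s, w i * z i| ≤ 1) :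
    |∑ i ∈ s, w i * a i - ∑ i ∈ s, w i * z i| ≤
      |∑ i ∈ s, w i * (a i - C * z i)| + (1 - C) := by
  set Z := ∑ i ∈ s, w i * z i
  have hcentre : ∑ i ∈ s, w i * (a i - C * z i) = ∑ i ∈ s, w i * a i - C * Z := by
    rw [Finset.mul_sum, ← Finset.sum_sub_distrib]
    exact Finset.sum_congr rfl fun i _ => by ring
  have hbias : |C * Z - Z| ≤ 1 - C := by
    rw [show C * Z - Z = -((1 - C) * Z) by ring, abs_neg, abs_mul,
      abs_of_nonneg (sub_nonneg.2 hC.2)]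
    exact mul_le_of_le_one_right (sub_nonneg.2 hC.2) hz
  rw [hcentre]
  linarith [abs_sub_le (∑ i ∈ s, w i * a i) (C * Z) Z]

theorem hds_propagation_error_general {Ω : Type*} [MeasurableSpace Ω]
    (μ : Measure Ω) [IsProbabilityMeasure μ]
    {V : Type*} [Fintype V] (d : ℕ)
    (b : ℝ) (hb : 0 ≤ b) (C : ℝ) (hC : C ∈ Set.Icc (0 : ℝ) 1)
    (σ : ℝ)
    (x : V → Fin d → ℝ) (hx : ∀ u j, x u j ∈ Set.Icc (-1 : ℝ) 1)
    (xt : V → Fin d → Ω → ℝ) (hmeas : ∀ u j, Measurable (xt u j))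
    (hbounded : ∀ u j ω, xt u j ω ∈ Set.Icc (-b - 1) (b + 1))
    (hmean : ∀ u j, ∫ ω, xt u j ω ∂μ = C * x u j)
    (hvar : ∀ u j, variance (xt u j) μ ≤ σ ^ 2)
    (hindep : ∀ j : Fin d, iIndepFun (fun u => xt u j) μ)
    (w : V → ℝ) (hw0 : ∀ u, 0 ≤ w u) (hw1 : ∑ u, w u = 1)
    (hz : ∀ j : Fin d, (∑ u, w u * x u j) ∈ Set.Icc (-1 : ℝ) 1)
    (δ : ℝ)
    (τ : ℝ) (hτ : 0 < τ)
    (hτδ : 2 * d * Real.exp (-τ ^ 2 /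
        (2 * σ ^ 2 * (∑ u, w u ^ 2) + (4 / 3) * τ * (b + 1))) ≤ δ) :
    ENNReal.ofReal (1 - δ) ≤
      μ {ω | ∀ j : Fin d,
        |(∑ u, w u * xt u j ω) - ∑ u, w u * x u j| ≤ τ + (1 - C)} := by
  have hw (u : V) : |w u| ≤ 1 := by
    rw [abs_of_nonneg (hw0 u), ← hw1]
    exact Finset.single_le_sum (fun v _ => hw0 v) (Finset.mem_univ u)
  have hdev (u j ω) : |xt u j ω - C * x u j| ≤ 2 * (b + 1) := by
    obtain ⟨hxt₁, hxt₂⟩ := hbounded u j ω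
    obtain ⟨hx₁, hx₂⟩ := hx u j
    exact abs_le.2 ⟨by nlinarith [hC.1, hC.2], by nlinarith [hC.1, hC.2]⟩
  have htail (j : Fin d) : μ.real {ω | τ < |∑ u, w u * (xt u j ω - C * x u j)|} ≤
      2 * exp (-τ ^ 2 / (2 * σ ^ 2 * (∑ u, w u ^ 2) + (4 / 3) * τ * (b + 1))) := by
    convert measureReal_abs_weighted_sum_sub_gt_le (hmeas · j) (hindep j) (hmean · j)
      (by linarith : 0 < 2 * (b + 1)) (hdev · j) hw (hvar · j) hτ using 4
    ring
  apply ofReal_one_sub_le_measure_of_measureReal_compl_le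
  calc μ.real {ω | ∀ j, |(∑ u, w u * xt u j ω) - ∑ u, w u * x u j| ≤ τ + (1 - C)}ᶜ
      ≤ μ.real (⋃ j, {ω | τ < |∑ u, w u * (xt u j ω - C * x u j)|}) := by
        refine measureReal_mono fun ω hω => ?_
        obtain ⟨j, hj⟩ := not_forall.1 hω
        have hbias := abs_weighted_sum_sub_le Finset.univ w (xt · j ω) (x · j) hC (abs_le.2 (hz j))
        exact Set.mem_iUnion.2 ⟨j, (by linarith [not_le.1 hj] : τ < _)⟩
    _ ≤ ∑ j : Fin d, 2 * exp (-τ ^ 2 / (2 * σ ^ 2 * (∑ u, w u ^ 2) + (4 / 3) * τ * (b + 1))) :=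
        (measureReal_iUnion_fintype_le _).trans (Finset.sum_le_sum fun j _ => htail j)
    _ = 2 * d * exp (-τ ^ 2 / (2 * σ ^ 2 * (∑ u, w u ^ 2) + (4 / 3) * τ * (b + 1))) := by
        rw [Finset.sum_const, Finset.card_univ, Fintype.card_fin, nsmul_eq_mul]
        ring
    _ ≤ δ := hτδ

/-- Worst-case error of the HDS mechanism under personalized-PageRank propagation:
with perturbed features bounded in `[-b-1, b+1]`, mean `C·x_{u,j}`, variance at most
`σ²`, independent across nodes, and propagation weights `w = Π_v` (nonnegative, summing
to `1`), if `τ` satisfies `2d·exp(-τ²/(2σ²‖Π_v‖₂² + (4/3)τ(b+1))) ≤ δ` then with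
probability at least `1-δ` we have `|z̃_{v,j} - z_{v,j}| ≤ τ + (1-C)` for every
coordinate `j`. -/
theorem hds_propagation_error {Ω : Type*} [MeasurableSpace Ω]
    (μ : Measure Ω) [IsProbabilityMeasure μ]
    {V : Type*} [Fintype V] [Nonempty V] (d : ℕ)
    (b : ℝ) (hb : 0 ≤ b) (C : ℝ) (hC : C ∈ Set.Icc (0 : ℝ) 1)
    (σ : ℝ) (hσ : 0 ≤ σ)
    (x : V → Fin d → ℝ) (hx : ∀ u j, x u j ∈ Set.Icc (-1 : ℝ) 1)
    (xt : V → Fin d → Ω → ℝ) (hmeas : ∀ u j, Measurable (xt u j))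
    (hbounded : ∀ u j ω, xt u j ω ∈ Set.Icc (-b - 1) (b + 1))
    (hmean : ∀ u j, ∫ ω, xt u j ω ∂μ = C * x u j)
    (hvar : ∀ u j, variance (xt u j) μ ≤ σ ^ 2)
    (hindep : ∀ j : Fin d, iIndepFun (fun u => xt u j) μ)
    (w : V → ℝ) (hw0 : ∀ u, 0 ≤ w u) (hw1 : ∑ u, w u = 1)
    (hz : ∀ j : Fin d, (∑ u, w u * x u j) ∈ Set.Icc (-1 : ℝ) 1)
    (δ : ℝ) (hδ : δ ∈ Set.Ioo (0 : ℝ) 1)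
    (τ : ℝ) (hτ : 0 < τ)
    (hτδ : 2 * d * Real.exp (-τ ^ 2 /
        (2 * σ ^ 2 * (∑ u, w u ^ 2) + (4 / 3) * τ * (b + 1))) ≤ δ) :
    ENNReal.ofReal (1 - δ) ≤
      μ {ω | ∀ j : Fin d,
        |(∑ u, w u * xt u j ω) - ∑ u, w u * x u j| ≤ τ + (1 - C)} :=
  hds_propagation_error_general μ d b hb C hC σ x hx xt hmeas hbounded hmean hvar hindep w hw0 hw1
    hz δ τ hτ hτδ
end

section
/- Variance of the high-dimensional Multi-bit mechanism: with sampling of k of d coordinates uniformly without replacement, per-coordinate budget ε/k, and calibration x̃ = (d(e^{ε/k}+1))/(k(e^{ε/k}-1)) · x̂ where x̂ is the raw output (±1 if sampled, 0 otherwise), the calibrated estimate satisfies E[x̃_j] = x_j and Var[x̃_j] = (d/k)·((e^{ε/k}+1)/(e^{ε/k}-1))² − x_j² for every coordinate j. -/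
/-! Conditionally on sampling, the raw output is `±1` with bias `2p - 1 = x (e - 1)/(e + 1)`,
so the calibrated output has mean `(k/d) λ x (e - 1)/(e + 1) = x`, while its square is `λ²`
whenever the coordinate is sampled, which gives second moment `(k/d) λ² = (d/k)((e+1)/(e-1))²`. -/

lemma signed_sample_mean (q p c : ℝ) :
    q * (p * (c * 1) + (1 - p) * (c * (-1))) + (1 - q) * (c * 0) = q * c * (2 * p - 1) := by
  ring

lemma signed_sample_second_moment (q p c : ℝ) :
    q * (p * (c * 1) ^ 2 + (1 - p) * (c * (-1)) ^ 2) + (1 - q) * (c * 0) ^ 2 = q * c ^ 2 := by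
  ring

lemma multibit_bias (x e : ℝ) (he : e + 1 ≠ 0) :
    2 * (1 / (e + 1) + (x + 1) / 2 * ((e - 1) / (e + 1))) - 1 = x * ((e - 1) / (e + 1)) := by
  field_simp
  ring

lemma sample_prob_mul_calibration (d k e : ℝ) (hd : d ≠ 0) (hk : k ≠ 0) :
    k / d * (d * (e + 1) / (k * (e - 1))) = (e + 1) / (e - 1) := by
  field_simp

theorem multibit_highdim_mean_variance_general (d k : ℕ) (hd : 0 < d) (hk : 0 < k)
    (ε : ℝ) (hε : 0 < ε) (x : ℝ) :
    let e := Real.exp (ε / k)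
    let p := 1 / (e + 1) + (x + 1) / 2 * ((e - 1) / (e + 1))
    let lam := (d : ℝ) * (e + 1) / ((k : ℝ) * (e - 1))
    -- expectation: E[x̃_j] = x_j
    ((k : ℝ) / d) * (p * (lam * 1) + (1 - p) * (lam * (-1))) +
        (1 - (k : ℝ) / d) * (lam * 0) = x ∧
    -- variance: E[x̃_j²] − (E[x̃_j])² = (d/k)((e+1)/(e-1))² − x_j²
    (((k : ℝ) / d) * (p * (lam * 1) ^ 2 + (1 - p) * (lam * (-1)) ^ 2) +
          (1 - (k : ℝ) / d) * (lam * 0) ^ 2) -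
        (((k : ℝ) / d) * (p * (lam * 1) + (1 - p) * (lam * (-1))) +
            (1 - (k : ℝ) / d) * (lam * 0)) ^ 2 =
      ((d : ℝ) / k) * ((e + 1) / (e - 1)) ^ 2 - x ^ 2 := by
  intro e p lam
  have he : 1 < e := Real.one_lt_exp_iff.mpr (div_pos hε (Nat.cast_pos.mpr hk))
  have hscale : (k : ℝ) / d * lam = (e + 1) / (e - 1) :=
    sample_prob_mul_calibration _ _ e (Nat.cast_ne_zero.mpr hd.ne') (Nat.cast_ne_zero.mpr hk.ne')
  have hmean : (k : ℝ) / d * lam * (2 * p - 1) = x := by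
    rw [multibit_bias x e (by linarith), hscale]
    field_simp [show e - 1 ≠ 0 by linarith, show e + 1 ≠ 0 by linarith]
  rw [signed_sample_mean, signed_sample_second_moment, hmean]
  refine ⟨rfl, ?_⟩
  rw [pow_two lam, ← mul_assoc, hscale]
  simp only [lam, div_eq_mul_inv, mul_inv]
  ring

/-- Mean and variance of the high-dimensional Multi-bit mechanism: coordinate `j` is
sampled with probability `k/d`; conditionally on sampling, the raw output is `1` with
probability `p = 1/(e^{ε/k}+1) + ((x_j+1)/2)·(e^{ε/k}-1)/(e^{ε/k}+1)` and `-1`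
otherwise; if not sampled the raw output is `0`.  The calibrated output is
`x̃_j = (d(e^{ε/k}+1))/(k(e^{ε/k}-1)) · (raw output)`.  Then `E[x̃_j] = x_j` and
`Var[x̃_j] = (d/k)·((e^{ε/k}+1)/(e^{ε/k}-1))² − x_j²`. -/
theorem multibit_highdim_mean_variance (d k : ℕ) (hd : 0 < d) (hk : 0 < k) (hkd : k ≤ d)
    (ε : ℝ) (hε : 0 < ε) (x : ℝ) (hx : x ∈ Set.Icc (-1 : ℝ) 1) :
    let e := Real.exp (ε / k)
    let p := 1 / (e + 1) + (x + 1) / 2 * ((e - 1) / (e + 1))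
    let lam := (d : ℝ) * (e + 1) / ((k : ℝ) * (e - 1))
    -- expectation: E[x̃_j] = x_j
    ((k : ℝ) / d) * (p * (lam * 1) + (1 - p) * (lam * (-1))) +
        (1 - (k : ℝ) / d) * (lam * 0) = x ∧
    -- variance: E[x̃_j²] − (E[x̃_j])² = (d/k)((e+1)/(e-1))² − x_j²
    (((k : ℝ) / d) * (p * (lam * 1) ^ 2 + (1 - p) * (lam * (-1)) ^ 2) +
          (1 - (k : ℝ) / d) * (lam * 0) ^ 2) -
        (((k : ℝ) / d) * (p * (lam * 1) + (1 - p) * (lam * (-1))) +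
            (1 - (k : ℝ) / d) * (lam * 0)) ^ 2 =
      ((d : ℝ) / k) * ((e + 1) / (e - 1)) ^ 2 - x ^ 2 :=
  multibit_highdim_mean_variance_general d k hd hk ε hε x
end
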